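/- arXiv:2512.21464 — 2 statements merged into one kernel-verified Lean document; each statement's English description precedes it below -/
import Mathlib

section
/- Let A, B ∈ ℝ^{n×n} be positive semidefinite, let T be an optimal transport matrix from A to B, and for t ∈ [0,1) define the McCann interpolant Γ_t := ((1−t)·I + t·T)·A·((1−t)·I + t·T)ᵀ. Then for every t ∈ [0,1): range(Γ_t) ∩ ker(A) = {0} (the A-Schur complement of Γ_t vanishes) and rank(Γ_t) = rank(A). -/
/-!
Write `a = √A` and `Q = a T a`. The OT conditions say `Q Qᵀ = a B a` and `tr Q = tr √(a B a)`;
in an eigenbasis of `R = √(a B a)` every diagonal entry of `Q` is bounded by the norm of its row,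
i.e. by the corresponding eigenvalue of `R`, so equality of traces forces `Q = R`, and `Q` is
positive semidefinite. With `S = (1 - t) I + t T` we get `a S a = (1 - t) A + t Q`, a positive
combination of psd matrices when `t < 1`, so `ker (a S a) = ker a`. Since `Γ_t = (S a)(S a)ᵀ`,
this yields `ker (S a) = ker a`, hence `rank Γ_t = rank (S a) = rank a = rank A`; and a vector
`x = S a w` with `a x = 0` has `a S a w = 0`, so `a w = 0` and `x = 0`.
-/

open Matrix

/-- The positive semidefinite square root of a psd matrix (junk value `0` otherwise). -/
noncomputable def psdSqrt {n : ℕ} (M : Matrix (Fin n) (Fin n) ℝ) : Matrix (Fin n) (Fin n) ℝ :=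
  letI := Classical.propDecidable M.PosSemidef
  if h : M.PosSemidef then
    (h.1.eigenvectorUnitary : Matrix (Fin n) (Fin n) ℝ) * diagonal (Real.sqrt ∘ h.1.eigenvalues) *
      (star h.1.eigenvectorUnitary : Matrix (Fin n) (Fin n) ℝ) else 0

/-- `trace √(√A·B·√A)`. -/
noncomputable def sqrtTr {n : ℕ} (A B : Matrix (Fin n) (Fin n) ℝ) : ℝ :=
  (psdSqrt (psdSqrt A * B * psdSqrt A)).trace

/-- `T` is an optimal transport matrix from `A` to `B`. -/
def IsOT {n : ℕ} (A B T : Matrix (Fin n) (Fin n) ℝ) : Prop :=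
  T * A * Tᵀ = B ∧ (A * T).trace = sqrtTr A B

/-- Squared Bures–Wasserstein distance. -/
noncomputable def W2sq {n : ℕ} (A B : Matrix (Fin n) (Fin n) ℝ) : ℝ :=
  A.trace + B.trace - 2 * sqrtTr A B

open scoped MatrixOrder ComplexOrder

namespace Matrix

theorem isSymm_sqrt {m : Type*} [Fintype m] [DecidableEq m] (M : Matrix m m ℝ) :
    (CFC.sqrt M).IsSymm := by
  rw [IsSymm, ← conjTranspose_eq_transpose_of_trivial]
  exact (CFC.sqrt_nonneg M).posSemidef.1

section Kernel

variable {m n K : Type*} [Fintype n]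

theorem ker_mulVecLin_smul [Field K] {s : K} (hs : s ≠ 0) (X : Matrix m n K) :
    LinearMap.ker (s • X).mulVecLin = LinearMap.ker X.mulVecLin := by
  ext w
  simp [hs]

theorem rank_eq_rank_of_ker_mulVecLin_eq [Field K] {X Y : Matrix m n K}
    (h : LinearMap.ker X.mulVecLin = LinearMap.ker Y.mulVecLin) : X.rank = Y.rank := by
  have hX := X.mulVecLin.finrank_range_add_finrank_ker
  have hY := Y.mulVecLin.finrank_range_add_finrank_ker
  rw [h] at hX
  exact Nat.add_right_cancel (hX.trans hY.symm)

theorem PosSemidef.ker_mulVecLin_add {𝕜 : Type*} [RCLike 𝕜] {X Y : Matrix n n 𝕜}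
    (hX : X.PosSemidef) (hY : Y.PosSemidef) :
    LinearMap.ker (X + Y).mulVecLin = LinearMap.ker X.mulVecLin ⊓ LinearMap.ker Y.mulVecLin := by
  ext w
  simp only [Submodule.mem_inf, LinearMap.mem_ker, mulVecLin_apply, add_mulVec]
  refine ⟨fun h => ?_, fun ⟨hXw, hYw⟩ => by rw [hXw, hYw, add_zero]⟩
  have hsum : star w ⬝ᵥ X *ᵥ w + star w ⬝ᵥ Y *ᵥ w = 0 := by
    rw [← dotProduct_add, h, dotProduct_zero]
  obtain ⟨hXw, hYw⟩ := (add_eq_zero_iff_of_nonneg (hX.dotProduct_mulVec_nonneg w)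
    (hY.dotProduct_mulVec_nonneg w)).mp hsum
  exact ⟨(hX.dotProduct_mulVec_zero_iff w).mp hXw, (hY.dotProduct_mulVec_zero_iff w).mp hYw⟩

variable {R : Type*} [CommRing R] {a S : Matrix n n R}

theorem ker_mulVecLin_mul_eq_of_ker_le
    (h : LinearMap.ker (a * S * a).mulVecLin ≤ LinearMap.ker a.mulVecLin) :
    LinearMap.ker (S * a).mulVecLin = LinearMap.ker a.mulVecLin := by
  refine le_antisymm (fun w hw => h ?_) (fun w hw => ?_)
  · simp_all [Matrix.mul_assoc]
  · simp_all

theorem range_mulVecLin_mul_inf_ker_eq_bot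
    (h : LinearMap.ker (a * S * a).mulVecLin ≤ LinearMap.ker a.mulVecLin) :
    LinearMap.range (S * a).mulVecLin ⊓ LinearMap.ker a.mulVecLin = ⊥ := by
  refine eq_bot_iff.mpr fun x ⟨⟨w, hw⟩, hx⟩ => ?_
  have haw : a *ᵥ w = 0 := h <| by simp_all [Matrix.mul_assoc]
  simp_all

end Kernel

variable {m : Type*} [Fintype m] [DecidableEq m]

theorem eq_diagonal_of_mul_transpose_eq_diagonal_mul_self {N : Matrix m m ℝ} {d : m → ℝ}
    (hd : 0 ≤ d) (hN : N * Nᵀ = diagonal d * diagonal d) (htr : N.trace = ∑ i, d i) :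
    N = diagonal d := by
  rw [diagonal_mul_diagonal] at hN
  have hrow (i : m) : ∑ j, N i j ^ 2 = d i ^ 2 := by
    simpa [mul_apply, sq] using congrFun (congrFun hN i) i
  have hle (i : m) : N i i ≤ d i := by
    refine abs_le_of_sq_le_sq' ?_ (hd i) |>.2
    exact hrow i ▸ Finset.single_le_sum (fun j _ => sq_nonneg (N i j)) (Finset.mem_univ i)
  have hdiag (i : m) : N i i = d i :=
    (Finset.sum_eq_sum_iff_of_le fun i _ => hle i).mp htr i (Finset.mem_univ i)
  ext i j
  obtain rfl | hij := eq_or_ne i j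
  · simp [hdiag]
  · have hoff : ∑ k ∈ Finset.univ.erase i, N i k ^ 2 = 0 := by
      have := Finset.add_sum_erase Finset.univ (fun k => N i k ^ 2) (Finset.mem_univ i)
      rw [hrow i, hdiag i] at this
      linarith
    rw [diagonal_apply_ne _ hij]
    exact pow_eq_zero_iff two_ne_zero |>.mp <|
      (Finset.sum_eq_zero_iff_of_nonneg fun k _ => sq_nonneg _).mp hoff j (by simp [hij.symm])

theorem eq_of_mul_transpose_eq_mul_self_of_trace_eq {Q R : Matrix m m ℝ} (hR : R.PosSemidef)
    (hQR : Q * Qᵀ = R * R) (htr : Q.trace = R.trace) : Q = R := by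
  set φ := Unitary.conjStarAlgAut ℝ (Matrix m m ℝ) (star hR.1.eigenvectorUnitary)
  have hφR : φ R = diagonal hR.1.eigenvalues := hR.1.conjStarAlgAut_star_eigenvectorUnitary
  have trace_φ (X : Matrix m m ℝ) : (φ X).trace = X.trace := by
    simp [φ, trace_mul_cycle]
  refine EquivLike.injective φ ?_
  rw [hφR]
  refine eq_diagonal_of_mul_transpose_eq_diagonal_mul_self hR.eigenvalues_nonneg ?_ ?_
  · calc φ Q * (φ Q)ᵀ = φ (Q * star Q) := by rw [map_mul, map_star]; rfl
      _ = φ R * φ R := by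
        rw [star_eq_conjTranspose, conjTranspose_eq_transpose_of_trivial, hQR, map_mul]
      _ = _ := by rw [hφR]
  · rw [trace_φ, htr, ← trace_φ, hφR, trace_diagonal]

end Matrix

theorem psdSqrt_eq_sqrt {n : ℕ} {M : Matrix (Fin n) (Fin n) ℝ} (hM : M.PosSemidef) :
    psdSqrt M = CFC.sqrt M := by
  rw [psdSqrt, dif_pos hM, CFC.sqrt_eq_cfc, cfc_nnreal_eq_real _ M, hM.1.cfc_eq, IsHermitian.cfc,
    Unitary.conjStarAlgAut_apply]
  congr 3
  ext i
  simp [Real.coe_sqrt, hM.eigenvalues_nonneg i]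

theorem IsOT.posSemidef_sqrt_mul_mul_sqrt {n : ℕ} {A B T : Matrix (Fin n) (Fin n) ℝ}
    (hA : A.PosSemidef) (hT : IsOT A B T) : (CFC.sqrt A * T * CFC.sqrt A).PosSemidef := by
  set a := CFC.sqrt A
  have haT : aᵀ = a := (isSymm_sqrt A).eq
  have haa : a * a = A := CFC.sqrt_mul_sqrt_self A hA.nonneg
  set Q := a * T * a
  have hQQ : Q * Qᵀ = a * B * a := by
    rw [← hT.1, ← haa]
    simp only [Q, transpose_mul, haT, Matrix.mul_assoc]
  have hC : (a * B * a).PosSemidef := by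
    simpa [hQQ, conjTranspose_eq_transpose_of_trivial] using posSemidef_self_mul_conjTranspose Q
  have htr : Q.trace = (CFC.sqrt (a * B * a)).trace := by
    rw [trace_mul_cycle, haa, hT.2, sqrtTr, psdSqrt_eq_sqrt hA, psdSqrt_eq_sqrt hC]
  rw [eq_of_mul_transpose_eq_mul_self_of_trace_eq (CFC.sqrt_nonneg _).posSemidef
    (hQQ.trans (CFC.sqrt_mul_sqrt_self _ hC.nonneg).symm) htr]
  exact (CFC.sqrt_nonneg _).posSemidef

theorem stmt4_general {n : ℕ} (A B T : Matrix (Fin n) (Fin n) ℝ)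
    (hA : A.PosSemidef) (hT : IsOT A B T)
    (t : ℝ) (ht0 : 0 ≤ t) (ht1 : t < 1)
    (Γ : Matrix (Fin n) (Fin n) ℝ)
    (hΓ : Γ = ((1 - t) • (1 : Matrix (Fin n) (Fin n) ℝ) + t • T) * A *
        ((1 - t) • (1 : Matrix (Fin n) (Fin n) ℝ) + t • T)ᵀ) :
    LinearMap.range Γ.mulVecLin ⊓ LinearMap.ker A.mulVecLin = ⊥ ∧ Γ.rank = A.rank := by
  set a := CFC.sqrt A
  have haT : aᵀ = a := (isSymm_sqrt A).eq
  have haa : a * a = A := CFC.sqrt_mul_sqrt_self A hA.nonneg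
  set S : Matrix (Fin n) (Fin n) ℝ := (1 - t) • 1 + t • T
  have hΓ_eq : Γ = S * a * (S * a)ᵀ := by
    rw [hΓ, transpose_mul, haT, ← haa]
    simp only [Matrix.mul_assoc]
  have hSa : a * S * a = (1 - t) • A + t • (a * T * a) := by
    simp only [S, Matrix.mul_add, Matrix.add_mul, Matrix.mul_smul, Matrix.smul_mul, Matrix.mul_one,
      haa]
  have hker_A : LinearMap.ker A.mulVecLin = LinearMap.ker a.mulVecLin := by
    simpa only [haT, haa] using ker_mulVecLin_transpose_mul_self a
  have hker : LinearMap.ker (a * S * a).mulVecLin ≤ LinearMap.ker a.mulVecLin := by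
    rw [hSa, (hA.smul (sub_nonneg.mpr ht1.le)).ker_mulVecLin_add
      ((hT.posSemidef_sqrt_mul_mul_sqrt hA).smul ht0), ker_mulVecLin_smul (sub_ne_zero.mpr ht1.ne'),
      hker_A]
    exact inf_le_left
  constructor
  · refine eq_bot_iff.mpr ?_
    rw [← range_mulVecLin_mul_inf_ker_eq_bot hker, hker_A, hΓ_eq, mulVecLin_mul]
    exact inf_le_inf_right _ (LinearMap.range_comp_le_range _ _)
  · rw [hΓ_eq, rank_self_mul_transpose, rank_eq_rank_of_ker_mulVecLin_eq
      (ker_mulVecLin_mul_eq_of_ker_le hker)]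
    simpa only [haT, haa] using (rank_transpose_mul_self a).symm

/-- Along the McCann interpolant
`Γ_t = ((1−t)·I + t·T)·A·((1−t)·I + t·T)ᵀ` of an OT matrix `T` from `A` to `B`,
for every `t ∈ [0,1)` the A-Schur complement vanishes
(`range Γ_t ∩ ker A = {0}`) and `rank Γ_t = rank A`. -/
theorem stmt4 {n : ℕ} (A B T : Matrix (Fin n) (Fin n) ℝ)
    (hA : A.PosSemidef) (hB : B.PosSemidef) (hT : IsOT A B T)
    (t : ℝ) (ht0 : 0 ≤ t) (ht1 : t < 1)
    (Γ : Matrix (Fin n) (Fin n) ℝ)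
    (hΓ : Γ = ((1 - t) • (1 : Matrix (Fin n) (Fin n) ℝ) + t • T) * A *
        ((1 - t) • (1 : Matrix (Fin n) (Fin n) ℝ) + t • T)ᵀ) :
    LinearMap.range Γ.mulVecLin ⊓ LinearMap.ker A.mulVecLin = ⊥ ∧ Γ.rank = A.rank :=
  stmt4_general A B T hA hT t ht0 ht1 Γ hΓ
end

section
/- Let A₁, …, A_m ∈ ℝ^{n×n} be positive semidefinite and p₁, …, p_m > 0 with p₁ + ⋯ + p_m = 1. If Â is positive semidefinite and minimizes B ↦ ∑ᵢ pᵢ·W₂²(Aᵢ, B) over all positive semidefinite matrices B, then range(Aᵢ) ∩ ker(Â) = {0} for every i = 1, …, m; in particular rank(Â) ≥ maxᵢ rank(Aᵢ). -/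
open Matrix

/-!
Suppose `x = Aᵢ y ≠ 0` lies in `ker Â` and perturb `Â` to `B = Â + c • y yᵀ`. With `S = √Aᵢ`,
`M = S Â S` and `w = S y`, the vector `w` is a nonzero element of `ker M`, so
`S B S = M + c • w wᵀ` has square root `√M + (√c / |w|) • w wᵀ`: the fidelity term
`trace √(S B S)` gains `√c · |w|`, while `trace B` grows only by `c · |y|²`. The fidelity terms
of the other `Aⱼ` do not decrease, because `trace √·` is monotone (`trace R ≤ trace √M` whenever
`R` is symmetric with `R² ≤ M`). For small `c` the barycenter cost therefore drops, contradicting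
minimality. The rank bound follows because `Â` is injective on `range Aᵢ`.
-/

namespace Matrix

variable {ι : Type*} [Fintype ι]

lemma IsSymm.apply_sq_le_mul_self_apply {R : Matrix ι ι ℝ} (hR : R.IsSymm) (k : ι) :
    R k k ^ 2 ≤ (R * R) k k := by
  rw [mul_apply]
  simp_rw [← hR.apply k, ← sq]
  exact Finset.single_le_sum (f := fun j => R j k ^ 2) (fun _ _ => sq_nonneg _) (Finset.mem_univ k)

lemma IsSymm.mul_add_smul_vecMulVec_mul_self {α : Type*} [CommRing α] {Q : Matrix ι ι α}
    (hQ : Q.IsSymm) {w : ι → α} (hw : Q *ᵥ w = 0) (s : α) :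
    (Q + s • vecMulVec w w) * (Q + s • vecMulVec w w) =
      Q * Q + (s ^ 2 * (w ⬝ᵥ w)) • vecMulVec w w := by
  have hw' : w ᵥ* Q = 0 := by rw [← mulVec_transpose, hQ.eq, hw]
  simp only [add_mul, mul_add, Matrix.smul_mul, Matrix.mul_smul, mul_vecMulVec, vecMulVec_mul,
    hw, hw', vecMulVec_zero, zero_vecMulVec, smul_zero, add_zero, zero_add, smul_mulVec,
    vecMulVec_mulVec, add_right_inj]
  ext i j
  simp only [smul_apply, vecMulVec_apply, Pi.smul_apply, MulOpposite.smul_eq_mul_unop,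
    MulOpposite.unop_op, smul_eq_mul]
  ring

lemma IsSymm.mul_add_smul_vecMulVec_mul {α : Type*} [CommRing α] {S : Matrix ι ι α}
    (hS : S.IsSymm) (B : Matrix ι ι α) (c : α) (y : ι → α) :
    S * (B + c • vecMulVec y y) * S = S * B * S + c • vecMulVec (S *ᵥ y) (S *ᵥ y) := by
  rw [mul_add, add_mul, Matrix.mul_smul, Matrix.smul_mul, mul_vecMulVec, vecMulVec_mul,
    ← mulVec_transpose, hS.eq]

lemma IsHermitian.star_eigenvectorUnitary_mul_mul_eigenvectorUnitary [DecidableEq ι]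
    {M : Matrix ι ι ℝ} (hM : M.IsHermitian) :
    star (hM.eigenvectorUnitary : Matrix ι ι ℝ) * M * hM.eigenvectorUnitary =
      diagonal hM.eigenvalues := by
  simpa using hM.conjStarAlgAut_star_eigenvectorUnitary

lemma rank_le_rank_of_range_inf_ker_eq_bot {K : Type*} [Field K] {l m : Type*} [Fintype m]
    [Fintype l] {X : Matrix m ι K} {Y : Matrix l m K}
    (h : LinearMap.range X.mulVecLin ⊓ LinearMap.ker Y.mulVecLin = ⊥) : X.rank ≤ Y.rank := by
  have hker : LinearMap.ker (Y * X).mulVecLin = LinearMap.ker X.mulVecLin := by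
    ext v
    simp only [LinearMap.mem_ker, mulVecLin_apply, ← mulVec_mulVec]
    refine ⟨fun hv => ?_, fun hv => by rw [hv, mulVec_zero]⟩
    have : X *ᵥ v ∈ LinearMap.range X.mulVecLin ⊓ LinearMap.ker Y.mulVecLin :=
      ⟨⟨v, rfl⟩, hv⟩
    simpa [h] using this
  have h₁ := LinearMap.finrank_range_add_finrank_ker (Y * X).mulVecLin
  rw [hker] at h₁
  have h₂ := LinearMap.finrank_range_add_finrank_ker X.mulVecLin
  calc X.rank = (Y * X).rank := by unfold rank; omega
    _ ≤ Y.rank := rank_mul_le_left _ _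

end Matrix

section psdSqrt

variable {n : ℕ} {M : Matrix (Fin n) (Fin n) ℝ}

lemma psdSqrt_of_posSemidef (hM : M.PosSemidef) :
    psdSqrt M = (hM.1.eigenvectorUnitary : Matrix (Fin n) (Fin n) ℝ) *
      diagonal (Real.sqrt ∘ hM.1.eigenvalues) * star (hM.1.eigenvectorUnitary : Matrix _ _ ℝ) :=
  dif_pos hM

lemma posSemidef_psdSqrt (hM : M.PosSemidef) : (psdSqrt M).PosSemidef := by
  rw [psdSqrt_of_posSemidef hM, star_eq_conjTranspose]
  exact (PosSemidef.diagonal fun _ => Real.sqrt_nonneg _).mul_mul_conjTranspose_same _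

lemma isSymm_psdSqrt (hM : M.PosSemidef) : (psdSqrt M).IsSymm :=
  isHermitian_iff_isSymm.1 (posSemidef_psdSqrt hM).1

lemma psdSqrt_mul_self (hM : M.PosSemidef) : psdSqrt M * psdSqrt M = M := by
  set U : Matrix (Fin n) (Fin n) ℝ := ↑hM.1.eigenvectorUnitary
  have hUU : star U * U = 1 := Unitary.coe_star_mul_self _
  have hD : diagonal (Real.sqrt ∘ hM.1.eigenvalues) * diagonal (Real.sqrt ∘ hM.1.eigenvalues) =
      diagonal hM.1.eigenvalues := by
    rw [diagonal_mul_diagonal]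
    exact congrArg diagonal (funext fun i => Real.mul_self_sqrt (hM.eigenvalues_nonneg i))
  calc psdSqrt M * psdSqrt M = U * (diagonal (Real.sqrt ∘ hM.1.eigenvalues) * (star U * U) *
        diagonal (Real.sqrt ∘ hM.1.eigenvalues)) * star U := by
          simp only [psdSqrt_of_posSemidef hM, U, mul_assoc]
    _ = U * diagonal hM.1.eigenvalues * star U := by rw [hUU, mul_one, hD]
    _ = M := by simpa using hM.1.spectral_theorem.symm

lemma trace_psdSqrt (hM : M.PosSemidef) :
    (psdSqrt M).trace = ∑ i, √(hM.1.eigenvalues i) := by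
  rw [psdSqrt_of_posSemidef hM, trace_mul_cycle, Unitary.coe_star_mul_self, one_mul,
    trace_diagonal]
  rfl

lemma trace_le_trace_psdSqrt (hM : M.PosSemidef) {R : Matrix (Fin n) (Fin n) ℝ} (hR : R.IsSymm)
    (h : (M - R * R).PosSemidef) : R.trace ≤ (psdSqrt M).trace := by
  set U : Matrix (Fin n) (Fin n) ℝ := ↑hM.1.eigenvectorUnitary
  have hUU : U * star U = 1 := Unitary.coe_mul_star_self _
  set R' := star U * R * U
  have hR' : R'.IsSymm := by
    simp only [IsSymm, R', transpose_mul, hR.eq, star_eq_conjTranspose,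
      conjTranspose_eq_transpose_of_trivial, transpose_transpose, mul_assoc]
  have hconj : star U * (M - R * R) * U = diagonal hM.1.eigenvalues - R' * R' := by
    rw [mul_sub, sub_mul, hM.1.star_eigenvectorUnitary_mul_mul_eigenvectorUnitary]
    congr 1
    calc star U * (R * R) * U = star U * R * (U * star U) * R * U := by
          rw [hUU, mul_one]; simp only [mul_assoc]
      _ = R' * R' := by simp only [R', mul_assoc]
  -- In an eigenbasis of `M`: `R' k k ^ 2 ≤ (R' * R') k k ≤ λ k`.
  have hdiag : ∀ k, R' k k ≤ √(hM.1.eigenvalues k) := by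
    intro k
    have h1 := (h.conjTranspose_mul_mul_same U).diag_nonneg (i := k)
    rw [← star_eq_conjTranspose, hconj, Matrix.sub_apply, diagonal_apply_eq] at h1
    exact (le_abs_self _).trans
      (Real.abs_le_sqrt ((hR'.apply_sq_le_mul_self_apply k).trans (by linarith)))
  calc R.trace = R'.trace := by rw [trace_mul_cycle, hUU, one_mul]
    _ ≤ ∑ k, √(hM.1.eigenvalues k) := Finset.sum_le_sum fun k _ => hdiag k
    _ = (psdSqrt M).trace := (trace_psdSqrt hM).symm

lemma psdSqrt_mulVec_eq_zero (hM : M.PosSemidef) {v : Fin n → ℝ} (hv : M *ᵥ v = 0) :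
    psdSqrt M *ᵥ v = 0 := by
  have hker := ker_mulVecLin_conjTranspose_mul_self (psdSqrt M)
  rw [(posSemidef_psdSqrt hM).1.eq, psdSqrt_mul_self hM] at hker
  exact (SetLike.ext_iff.1 hker v).1 hv

end psdSqrt

section sqrtTr

variable {n : ℕ} {A B : Matrix (Fin n) (Fin n) ℝ}

lemma posSemidef_psdSqrt_mul_mul_psdSqrt (hA : A.PosSemidef) (hB : B.PosSemidef) :
    (psdSqrt A * B * psdSqrt A).PosSemidef := by
  simpa [(isSymm_psdSqrt hA).eq] using hB.conjTranspose_mul_mul_same (psdSqrt A)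

lemma sqrtTr_mono (hA : A.PosSemidef) (hB : B.PosSemidef) {B' : Matrix (Fin n) (Fin n) ℝ}
    (hBB' : (B' - B).PosSemidef) : sqrtTr A B ≤ sqrtTr A B' := by
  have hM := posSemidef_psdSqrt_mul_mul_psdSqrt hA hB
  have hB' : B'.PosSemidef := by simpa using hB.add hBB'
  refine trace_le_trace_psdSqrt (posSemidef_psdSqrt_mul_mul_psdSqrt hA hB') (isSymm_psdSqrt hM) ?_
  rw [psdSqrt_mul_self hM, ← sub_mul, ← mul_sub]
  exact posSemidef_psdSqrt_mul_mul_psdSqrt hA hBB'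

lemma sqrtTr_add_le_sqrtTr_add_smul_vecMulVec (hA : A.PosSemidef) (hB : B.PosSemidef)
    {y : Fin n → ℝ} (hy : B *ᵥ (A *ᵥ y) = 0) (s : ℝ) :
    sqrtTr A B + s * (psdSqrt A *ᵥ y ⬝ᵥ psdSqrt A *ᵥ y) ≤
      sqrtTr A (B + (s ^ 2 * (psdSqrt A *ᵥ y ⬝ᵥ psdSqrt A *ᵥ y)) • vecMulVec y y) := by
  set S := psdSqrt A
  set w := S *ᵥ y
  have hM := posSemidef_psdSqrt_mul_mul_psdSqrt hA hB
  have hMw : (S * B * S) *ᵥ w = 0 := by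
    rw [← mulVec_mulVec, ← mulVec_mulVec, mulVec_mulVec _ S S, psdSqrt_mul_self hA, hy,
      mulVec_zero]
  -- Since `w ∈ ker (S * B * S)`, the cross terms vanish and `R * R` is the perturbed matrix.
  set R := psdSqrt (S * B * S) + s • vecMulVec w w
  have hR : R.IsSymm := (isSymm_psdSqrt hM).add (IsSymm.smul (transpose_vecMulVec w w) s)
  have hRR : R * R = S * (B + (s ^ 2 * (w ⬝ᵥ w)) • vecMulVec y y) * S := by
    rw [(isSymm_psdSqrt hM).mul_add_smul_vecMulVec_mul_self (psdSqrt_mulVec_eq_zero hM hMw),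
      psdSqrt_mul_self hM, (isSymm_psdSqrt hA).mul_add_smul_vecMulVec_mul]
  have hG : (R * R).PosSemidef := by
    simpa [hR.eq] using posSemidef_conjTranspose_mul_self R
  have hle := trace_le_trace_psdSqrt hG hR (by simpa using PosSemidef.zero)
  rw [hRR, trace_add, trace_smul, trace_vecMulVec, smul_eq_mul] at hle
  exact hle

end sqrtTr

section Barycenter

variable {n m : ℕ} (A : Fin m → Matrix (Fin n) (Fin n) ℝ) (p : Fin m → ℝ)

lemma sum_mul_W2sq_eq (hp1 : ∑ i, p i = 1) (B : Matrix (Fin n) (Fin n) ℝ) :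
    ∑ i, p i * W2sq (A i) B =
      ∑ i, p i * (A i).trace + B.trace - 2 * ∑ i, p i * sqrtTr (A i) B := by
  simp only [W2sq, mul_sub, mul_add, Finset.sum_sub_distrib, Finset.sum_add_distrib,
    ← Finset.sum_mul, hp1, one_mul, Finset.mul_sum, mul_left_comm (2 : ℝ)]

lemma exists_sum_mul_W2sq_lt {i : Fin m} (hA : ∀ j, (A j).PosSemidef) (hp : ∀ j, 0 ≤ p j)
    (hpi : 0 < p i) (hp1 : ∑ j, p j = 1) {Ahat : Matrix (Fin n) (Fin n) ℝ}
    (hAhat : Ahat.PosSemidef) {y : Fin n → ℝ} (hy : Ahat *ᵥ (A i *ᵥ y) = 0)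
    (hy0 : A i *ᵥ y ≠ 0) :
    ∃ B : Matrix (Fin n) (Fin n) ℝ, B.PosSemidef ∧
      ∑ j, p j * W2sq (A j) B < ∑ j, p j * W2sq (A j) Ahat := by
  set w := psdSqrt (A i) *ᵥ y
  have hw0 : w ≠ 0 := fun hw0 => hy0 <| by
    rw [← psdSqrt_mul_self (hA i), ← mulVec_mulVec]
    change psdSqrt (A i) *ᵥ w = 0
    rw [hw0, mulVec_zero]
  have hy0' : y ≠ 0 := fun hy' => hy0 <| by rw [hy', mulVec_zero]
  have hw : 0 < w ⬝ᵥ w := by simpa [star_trivial] using dotProduct_self_star_pos_iff.2 hw0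
  have hyy : 0 < y ⬝ᵥ y := by simpa [star_trivial] using dotProduct_self_star_pos_iff.2 hy0'
  set s := p i / (y ⬝ᵥ y)
  set c := s ^ 2 * (w ⬝ᵥ w)
  have hD : (c • vecMulVec y y).PosSemidef := by
    simpa using (posSemidef_vecMulVec_self_star y).smul (by positivity : 0 ≤ c)
  set B := Ahat + c • vecMulVec y y
  refine ⟨B, hAhat.add hD, ?_⟩
  have hgain : p i * (s * (w ⬝ᵥ w)) ≤
      ∑ j, p j * sqrtTr (A j) B - ∑ j, p j * sqrtTr (A j) Ahat := by
    rw [← Finset.sum_sub_distrib]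
    calc p i * (s * (w ⬝ᵥ w)) ≤ p i * (sqrtTr (A i) B - sqrtTr (A i) Ahat) :=
          mul_le_mul_of_nonneg_left
            (le_sub_iff_add_le'.2 (sqrtTr_add_le_sqrtTr_add_smul_vecMulVec (hA i) hAhat hy s))
            hpi.le
      _ ≤ ∑ j, p j * (sqrtTr (A j) B - sqrtTr (A j) Ahat) :=
          Finset.single_le_sum (f := fun j => p j * (sqrtTr (A j) B - sqrtTr (A j) Ahat))
            (fun j _ => mul_nonneg (hp j)
              (sub_nonneg.2 (sqrtTr_mono (hA j) hAhat (by simpa [B] using hD))))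
            (Finset.mem_univ i)
      _ = _ := by simp only [mul_sub]
  have hc : c * (y ⬝ᵥ y) = p i * (s * (w ⬝ᵥ w)) := by
    simp only [c, s]
    field_simp
  have hpos : 0 < p i * (s * (w ⬝ᵥ w)) := by positivity
  rw [sum_mul_W2sq_eq A p hp1, sum_mul_W2sq_eq A p hp1, trace_add, trace_smul, trace_vecMulVec,
    smul_eq_mul]
  linarith

end Barycenter

/-- If `Â` is a weighted Wasserstein barycenter of psd matrices
`A₁, …, A_m`, then `range Aᵢ ∩ ker Â = {0}` for each `i`; in particular
`rank Â ≥ max_i rank Aᵢ`. -/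
theorem stmt9 {n m : ℕ} (A : Fin m → Matrix (Fin n) (Fin n) ℝ)
    (hA : ∀ i, (A i).PosSemidef)
    (p : Fin m → ℝ) (hp : ∀ i, 0 < p i) (hp1 : ∑ i, p i = 1)
    (Ahat : Matrix (Fin n) (Fin n) ℝ) (hAhat : Ahat.PosSemidef)
    (hmin : ∀ B : Matrix (Fin n) (Fin n) ℝ, B.PosSemidef →
      ∑ i, p i * W2sq (A i) Ahat ≤ ∑ i, p i * W2sq (A i) B) :
    (∀ i, LinearMap.range (A i).mulVecLin ⊓ LinearMap.ker Ahat.mulVecLin = ⊥) ∧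
      ∀ i, (A i).rank ≤ Ahat.rank := by
  have hrange : ∀ i, LinearMap.range (A i).mulVecLin ⊓ LinearMap.ker Ahat.mulVecLin = ⊥ := by
    intro i
    refine (Submodule.eq_bot_iff _).2 ?_
    rintro _ ⟨⟨y, rfl⟩, hy⟩
    by_contra hy0
    obtain ⟨B, hB, hlt⟩ :=
      exists_sum_mul_W2sq_lt A p hA (fun j => (hp j).le) (hp i) hp1 hAhat hy hy0
    exact (hmin B hB).not_gt hlt
  exact ⟨hrange, fun i => rank_le_rank_of_range_inf_ker_eq_bot (hrange i)⟩
end
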